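/- arXiv:math/0605302 — 5 statements merged into one kernel-verified Lean document; each statement's English description precedes it below -/
import Mathlib

section
/- Let $V$ be a vector space over $\mathbb{Q}$, $n\ge 1$, and let $\lambda_0,\dots,\lambda_{n+1}\in V$ with $\lambda(k)=\sum_{i=0}^{n+1}\binom{k}{i}\lambda_i$, let $p(k)=a_0k^n+a_1k^{n-1}+\cdots+a_n$ with $a_i\in\mathbb{Q}$, $a_0>0$, $\mu=2a_1/a_0$, and $\lambda_{CM}=(\mu+n(n+1))\lambda_{n+1}-2(n+1)\lambda_n$. Define $\lambda_{Hilb}(r,k)=p(r)\,\lambda(kr)-k\,p(kr)\,\lambda(r)\in V$. Then there exist elements $\epsilon_{i,j}\in V$, indexed by integers $0\le i\le n+1$ and $0\le j\le 2n+1$ with $j\le 2n-1$ whenever $i=n+1$, such that for all integers $k,r\ge 1$: $\lambda_{Hilb}(r,k)=\frac{a_0}{2(n+1)!}\,k^{n+1}r^{2n}\,\lambda_{CM}+\sum_{i,j}k^i r^j\,\epsilon_{i,j}$. -/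
/-!
Writing `B_m` for the binomial polynomial `x ↦ binom(x, m)`, `λ_Hilb(r, k)` is `∑ₘ H(p, B_m) λ_m`
with `H(P, B)(k, r) = P(r) B(kr) - k P(kr) B(r)`. `H` is bilinear and
`H(Xᵗ, Xˢ) = kˢ r^(t+s) - k^(t+1) r^(t+s)`, so for `t ≤ n`, `s ≤ n + 1` every such monomial
has admissible exponents except `k^(n+1) r^(2n)` and `k^(n+1) r^(2n+1)`. The latter only
arises from `(t, s) = (n, n + 1)`, where it cancels, and the former from `(n - 1, n + 1)` and
`(n, n)`. Hence the coefficient of `k^(n+1) r^(2n) λ_m` is `a₁ [Xⁿ⁺¹] B_m - a₀ [Xⁿ] B_m`, which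
is `-a₀/n!` for `m = n`, `(a₁ + a₀ n(n+1)/2)/(n+1)!` for `m = n + 1` and `0` otherwise:
together `a₀/(2(n+1)!) λ_CM`.
-/

open Polynomial Finset Nat

namespace FineRoss

def monomialSpan (V : Type*) [AddCommGroup V] [Module ℚ V] (S : Finset (ℕ × ℕ)) :
    Submodule ℚ (ℕ → ℕ → V) where
  carrier := {F | ∃ ε : ℕ → ℕ → V, ∀ k r : ℕ,
    F k r = ∑ ij ∈ S, ((k : ℚ) ^ ij.1 * (r : ℚ) ^ ij.2) • ε ij.1 ij.2}
  add_mem' := by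
    rintro F G ⟨ε, hε⟩ ⟨δ, hδ⟩
    exact ⟨ε + δ, fun k r => by simp [hε, hδ, smul_add, sum_add_distrib]⟩
  zero_mem' := ⟨0, fun k r => by simp⟩
  smul_mem' := by
    rintro c F ⟨ε, hε⟩
    exact ⟨c • ε, fun k r => by simp [hε, smul_sum, smul_comm c]⟩

section monomialSpan

variable {V : Type*} [AddCommGroup V] [Module ℚ V] {S : Finset (ℕ × ℕ)}

theorem monomial_mem_monomialSpan {i j : ℕ} (h : (i, j) ∈ S) :
    (fun k r : ℕ => (k : ℚ) ^ i * (r : ℚ) ^ j) ∈ monomialSpan ℚ S := by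
  classical
  refine ⟨fun a b => if (a, b) = (i, j) then 1 else 0, fun k r => ?_⟩
  rw [sum_eq_single_of_mem (i, j) h (fun ij _ hij => by simp [hij])]
  simp

theorem smul_const_mem_monomialSpan {f : ℕ → ℕ → ℚ} (hf : f ∈ monomialSpan ℚ S)
    (v : V) :
    (fun k r => f k r • v) ∈ monomialSpan V S := by
  obtain ⟨ε, hε⟩ := hf
  exact ⟨fun i j => ε i j • v, fun k r => by simp [hε, sum_smul, mul_smul]⟩

end monomialSpan

def hilbExponents (n : ℕ) : Finset (ℕ × ℕ) :=
  (range (n + 2) ×ˢ range (2 * n + 2)).filter (fun ij => ij.1 = n + 1 → ij.2 ≤ 2 * n - 1)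

theorem mem_hilbExponents {n i j : ℕ} :
    (i, j) ∈ hilbExponents n ↔
      i ≤ n + 1 ∧ j ≤ 2 * n + 1 ∧ (i = n + 1 → j ≤ 2 * n - 1) := by
  simp only [hilbExponents, mem_filter, mem_product, mem_range]
  omega

def hilbTerm (P B : ℚ[X]) (k r : ℕ) : ℚ :=
  P.eval (r : ℚ) * B.eval ((k : ℚ) * r) - k * P.eval ((k : ℚ) * r) * B.eval (r : ℚ)

theorem hilbTerm_X_pow (t s k r : ℕ) :
    hilbTerm (X ^ t) (X ^ s) k r
      = (k : ℚ) ^ s * (r : ℚ) ^ (t + s) - (k : ℚ) ^ (t + 1) * (r : ℚ) ^ (t + s) := by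
  simp only [hilbTerm, eval_pow, eval_X]
  ring

theorem hilbTerm_eq_sum {P B : ℚ[X]} {N M : ℕ} (hP : P.natDegree < N) (hB : B.natDegree < M)
    (k r : ℕ) :
    hilbTerm P B k r
      = ∑ x ∈ range N ×ˢ range M,
          P.coeff x.1 * B.coeff x.2 * hilbTerm (X ^ x.1) (X ^ x.2) k r := by
  rw [hilbTerm, eval_eq_sum_range' hP, eval_eq_sum_range' hP, eval_eq_sum_range' hB,
    eval_eq_sum_range' hB, mul_assoc (k : ℚ), sum_mul_sum, sum_mul_sum, mul_sum, sum_product,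
    ← sum_sub_distrib]
  refine sum_congr rfl fun t _ => ?_
  rw [mul_sum, ← sum_sub_distrib]
  refine sum_congr rfl fun s _ => ?_
  rw [hilbTerm_X_pow]
  ring

theorem hilbTerm_X_pow_sub_mem {n t s : ℕ} (hn : 1 ≤ n) (ht : t ≤ n) (hs : s ≤ n + 1) :
    (fun k r : ℕ => hilbTerm (X ^ t) (X ^ s) k r
      - ((if (t, s) = (n - 1, n + 1) then 1 else 0) - (if (t, s) = (n, n) then 1 else 0))
        * (k : ℚ) ^ (n + 1) * (r : ℚ) ^ (2 * n)) ∈ monomialSpan ℚ (hilbExponents n) := by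
  have mono : ∀ {i j}, i ≤ n + 1 → j ≤ 2 * n + 1 → (i = n + 1 → j ≤ 2 * n - 1) →
      (fun k r : ℕ => (k : ℚ) ^ i * (r : ℚ) ^ j) ∈ monomialSpan ℚ (hilbExponents n) :=
    fun hi hj hij => monomial_mem_monomialSpan (mem_hilbExponents.mpr ⟨hi, hj, hij⟩)
  simp only [hilbTerm_X_pow, Prod.mk.injEq]
  have hpred : n ≠ n - 1 := by omega
  by_cases h₁ : t = n - 1 ∧ s = n + 1
  · obtain ⟨rfl, rfl⟩ := h₁
    have hsum : n - 1 + (n + 1) = 2 * n := by omega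
    have hsucc : n - 1 + 1 = n := by omega
    convert neg_mem (mono (i := n) (j := 2 * n) (by omega) (by omega) (by omega)) using 1
    funext k r
    simp [hsum, hsucc, hpred.symm]
  by_cases h₂ : t = n ∧ s = n
  · obtain ⟨htn, hsn⟩ := h₂
    subst t s
    convert mono (i := n) (j := 2 * n) (by omega) (by omega) (by omega) using 1
    funext k r
    simp [hpred, two_mul]
  by_cases h₃ : t = n ∧ s = n + 1
  · obtain ⟨htn, hsn⟩ := h₃
    subst t s
    convert zero_mem (monomialSpan ℚ (hilbExponents n)) using 1
    funext k r
    simp [hpred]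
  simp only [h₁, h₂, if_false, sub_zero, zero_mul]
  exact sub_mem (mono (by omega) (by omega) (by omega)) (mono (by omega) (by omega) (by omega))

theorem hilbTerm_sub_leading_mem {n : ℕ} (hn : 1 ≤ n) {P B : ℚ[X]} (hP : P.natDegree ≤ n)
    (hB : B.natDegree ≤ n + 1) :
    (fun k r => hilbTerm P B k r - (P.coeff (n - 1) * B.coeff (n + 1) - P.coeff n * B.coeff n)
      * (k : ℚ) ^ (n + 1) * (r : ℚ) ^ (2 * n)) ∈ monomialSpan ℚ (hilbExponents n) := by
  set δ : ℕ × ℕ → ℚ := fun x =>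
    (if x = (n - 1, n + 1) then 1 else 0) - (if x = (n, n) then 1 else 0)
  have hδ : ∑ x ∈ range (n + 1) ×ˢ range (n + 2), P.coeff x.1 * B.coeff x.2 * δ x
      = P.coeff (n - 1) * B.coeff (n + 1) - P.coeff n * B.coeff n := by
    simp [δ, mul_sub, sum_sub_distrib]
  have hsplit : (fun k r => hilbTerm P B k r
      - (P.coeff (n - 1) * B.coeff (n + 1) - P.coeff n * B.coeff n)
        * (k : ℚ) ^ (n + 1) * (r : ℚ) ^ (2 * n)) = ∑ x ∈ range (n + 1) ×ˢ range (n + 2),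
        (P.coeff x.1 * B.coeff x.2) • fun k r : ℕ =>
          hilbTerm (X ^ x.1) (X ^ x.2) k r - δ x * (k : ℚ) ^ (n + 1) * (r : ℚ) ^ (2 * n) := by
    funext k r
    simp only [hilbTerm_eq_sum (Nat.lt_succ_of_le hP) (Nat.lt_succ_of_le hB), ← hδ, sum_mul,
      ← sum_sub_distrib, Finset.sum_apply, Pi.smul_apply, smul_eq_mul]
    exact sum_congr rfl fun x _ => by ring
  rw [hsplit]
  refine sum_mem fun x hx => Submodule.smul_mem _ _ ?_
  simp only [mem_product, mem_range] at hx
  exact hilbTerm_X_pow_sub_mem hn (by omega) (by omega)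

noncomputable def binomialPoly (m : ℕ) : ℚ[X] := C (m ! : ℚ)⁻¹ * descPochhammer ℚ m

theorem binomialPoly_eval_natCast (m K : ℕ) : (binomialPoly m).eval (K : ℚ) = K.choose m := by
  rw [binomialPoly, eval_mul, eval_C, descPochhammer_eval_eq_descFactorial,
    Nat.descFactorial_eq_factorial_mul_choose, Nat.cast_mul, inv_mul_cancel_left₀ (by positivity)]

theorem natDegree_binomialPoly (m : ℕ) : (binomialPoly m).natDegree = m := by
  rw [binomialPoly, natDegree_C_mul (by positivity), descPochhammer_natDegree]

theorem descPochhammer_coeff_self (R : Type*) [Ring R] [Nontrivial R] [NoZeroDivisors R]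
    (m : ℕ) : (descPochhammer R m).coeff m = 1 := by
  simpa [descPochhammer_natDegree] using (monic_descPochhammer R m).coeff_natDegree

theorem binomialPoly_coeff_self (m : ℕ) : (binomialPoly m).coeff m = (m ! : ℚ)⁻¹ := by
  rw [binomialPoly, coeff_C_mul, descPochhammer_coeff_self ℚ, mul_one]

theorem descPochhammer_coeff_pred (m : ℕ) :
    (descPochhammer ℚ (m + 1)).coeff m = -(m * (m + 1) / 2 : ℚ) := by
  induction m with
  | zero => simp [descPochhammer_one]
  | succ m ih =>
    rw [descPochhammer_succ_right, mul_sub, coeff_sub, coeff_mul_X, ← C_eq_natCast, coeff_mul_C,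
      ih, descPochhammer_coeff_self ℚ]
    push_cast
    ring

theorem binomialPoly_succ_coeff (m : ℕ) :
    (binomialPoly (m + 1)).coeff m = -(m * (m + 1) / 2 : ℚ) / (m + 1)! := by
  rw [binomialPoly, coeff_C_mul, descPochhammer_coeff_pred, inv_mul_eq_div]

theorem sum_binomialPoly_coeff_smul {V : Type*} [AddCommGroup V] [Module ℚ V] (n : ℕ)
    (x y : ℚ) (v : ℕ → V) :
    ∑ m ∈ range (n + 2),
        (x * (binomialPoly m).coeff (n + 1) - y * (binomialPoly m).coeff n) • v m
      = (x / (n + 1)! + y * (n * (n + 1) / 2) / (n + 1)!) • v (n + 1) - (y / n !) • v n := by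
  have hlow : ∀ m ∈ range n,
      (binomialPoly m).coeff (n + 1) = 0 ∧ (binomialPoly m).coeff n = 0 :=
    fun m hm => by
      have := mem_range.mp hm
      constructor <;> exact coeff_eq_zero_of_natDegree_lt (by rw [natDegree_binomialPoly]; omega)
  have hn1 : (binomialPoly n).coeff (n + 1) = 0 :=
    coeff_eq_zero_of_natDegree_lt (by rw [natDegree_binomialPoly]; omega)
  rw [sum_range_succ, sum_range_succ, sum_eq_zero fun m hm => by simp [hlow m hm],
    binomialPoly_coeff_self, binomialPoly_coeff_self, binomialPoly_succ_coeff, hn1]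
  match_scalars <;> ring

noncomputable def descCoeffPoly (a : ℕ → ℚ) (n : ℕ) : ℚ[X] :=
  ∑ i ∈ range (n + 1), monomial (n - i) (a i)

theorem descCoeffPoly_eval (a : ℕ → ℚ) (n : ℕ) (x : ℚ) :
    (descCoeffPoly a n).eval x = ∑ i ∈ range (n + 1), a i * x ^ (n - i) := by
  simp [descCoeffPoly, eval_finsetSum]

theorem natDegree_descCoeffPoly_le (a : ℕ → ℚ) (n : ℕ) :
    (descCoeffPoly a n).natDegree ≤ n :=
  natDegree_sum_le_of_forall_le _ _ fun i _ => (natDegree_monomial_le _).trans (Nat.sub_le n i)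

theorem descCoeffPoly_coeff_sub {a : ℕ → ℚ} {n j : ℕ} (hj : j ≤ n) :
    (descCoeffPoly a n).coeff (n - j) = a j := by
  rw [descCoeffPoly, finsetSum_coeff, sum_eq_single_of_mem j (mem_range.mpr (by omega))]
  · simp
  · intro i hi hij
    rw [coeff_monomial, if_neg]
    have := mem_range.mp hi
    omega

theorem hilbTerm_binomialPoly_sub_leading_mem {n m : ℕ} (hn : 1 ≤ n) (hm : m ≤ n + 1)
    (a : ℕ → ℚ) :
    (fun k r => hilbTerm (descCoeffPoly a n) (binomialPoly m) k r
      - (a 1 * (binomialPoly m).coeff (n + 1) - a 0 * (binomialPoly m).coeff n)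
        * (k : ℚ) ^ (n + 1) * (r : ℚ) ^ (2 * n)) ∈ monomialSpan ℚ (hilbExponents n) := by
  have h := hilbTerm_sub_leading_mem hn (natDegree_descCoeffPoly_le a n)
    ((natDegree_binomialPoly m).trans_le hm)
  have hlead : (descCoeffPoly a n).coeff n = a 0 := by
    simpa using descCoeffPoly_coeff_sub (a := a) (Nat.zero_le n)
  rwa [descCoeffPoly_coeff_sub hn, hlead] at h

end FineRoss

open FineRoss

/-- Proposition 3.3 of Fine–Ross: the CM class is the leading order term of
`λ_Hilb(r,k) = p(r)·λ(kr) - k·p(kr)·λ(r)` for `k ≫ r ≫ 0`. -/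
theorem cm_is_leading_order_of_hilb
    (V : Type*) [AddCommGroup V] [Module ℚ V]
    (n : ℕ) (hn : 1 ≤ n)
    (lam : ℕ → V)
    (Lam : ℕ → V)
    (hLam : ∀ k : ℕ, Lam k = ∑ i ∈ Finset.range (n + 2), ((k.choose i : ℚ)) • lam i)
    (a : ℕ → ℚ) (ha0 : 0 < a 0)
    (p : ℕ → ℚ)
    (hp : ∀ k : ℕ, p k = ∑ i ∈ Finset.range (n + 1), a i * (k : ℚ) ^ (n - i))
    (μ : ℚ) (hμ : μ = 2 * a 1 / a 0)
    (lamCM : V)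
    (hCM : lamCM = (μ + n * (n + 1)) • lam (n + 1) - ((2 * (n + 1) : ℚ)) • lam n)
    (lamHilb : ℕ → ℕ → V)
    (hHilb : ∀ r k : ℕ, lamHilb r k = p r • Lam (k * r) - ((k : ℚ) * p (k * r)) • Lam r) :
    ∃ ε : ℕ → ℕ → V, ∀ k r : ℕ, 1 ≤ k → 1 ≤ r →
      lamHilb r k
        = (a 0 / (2 * (n + 1).factorial) * (k : ℚ) ^ (n + 1) * (r : ℚ) ^ (2 * n)) • lamCM
          + ∑ ij ∈ (Finset.range (n + 2) ×ˢ Finset.range (2 * n + 2)).filter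
              (fun ij => ij.1 = n + 1 → ij.2 ≤ 2 * n - 1),
              ((k : ℚ) ^ ij.1 * (r : ℚ) ^ ij.2) • ε ij.1 ij.2 := by
  set c : ℕ → ℚ := fun m =>
    a 1 * (binomialPoly m).coeff (n + 1) - a 0 * (binomialPoly m).coeff n
  have hLamHilb : ∀ k r, lamHilb r k
      = ∑ m ∈ range (n + 2), hilbTerm (descCoeffPoly a n) (binomialPoly m) k r • lam m := by
    intro k r
    simp only [hHilb, hLam, hp, smul_sum, ← sum_sub_distrib, smul_smul, ← sub_smul, hilbTerm,
      descCoeffPoly_eval, ← binomialPoly_eval_natCast, Nat.cast_mul]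
  have hCM' : ∑ m ∈ range (n + 2), c m • lam m = (a 0 / (2 * (n + 1)!)) • lamCM := by
    rw [sum_binomialPoly_coeff_smul, hCM, hμ, smul_sub, smul_smul, smul_smul, factorial_succ]
    push_cast
    match_scalars <;> field_simp
  obtain ⟨ε, hε⟩ : ∑ m ∈ range (n + 2), (fun k r : ℕ =>
      (hilbTerm (descCoeffPoly a n) (binomialPoly m) k r
        - c m * (k : ℚ) ^ (n + 1) * (r : ℚ) ^ (2 * n)) • lam m)
      ∈ monomialSpan V (hilbExponents n) :=
    sum_mem fun m hm => smul_const_mem_monomialSpan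
      (hilbTerm_binomialPoly_sub_leading_mem hn (Nat.lt_succ_iff.mp (mem_range.mp hm)) a) (lam m)
  refine ⟨ε, fun k r _ _ => ?_⟩
  have hsplit := hε k r
  simp only [Finset.sum_apply, hilbExponents] at hsplit
  rw [hLamHilb, ← hsplit, mul_assoc, mul_comm (a 0 / _), mul_smul, ← hCM', smul_sum,
    ← sum_add_distrib]
  refine sum_congr rfl fun m _ => ?_
  rw [smul_smul, ← add_smul]
  congr 1
  ring
end

section
/- Let $V$ be a vector space over $\mathbb{Q}$, $n\ge 1$, and let $\lambda_0,\dots,\lambda_{n+1}\in V$ with $\lambda(k)=\sum_{i=0}^{n+1}\binom{k}{i}\lambda_i$, let $p(k)=a_0k^n+a_1k^{n-1}+\cdots+a_n$ with $a_i\in\mathbb{Q}$, $a_0>0$, $\mu=2a_1/a_0$, and $\lambda_{CM}=(\mu+n(n+1))\lambda_{n+1}-2(n+1)\lambda_n$. Define $\lambda_{CH}(r)=p(r)r^{n+1}\,\lambda_{n+1}-a_0(n+1)!\,r^n\,\lambda(r)\in V$. Then there exist elements $\epsilon_0,\dots,\epsilon_{2n-1}\in V$ such that for all integers $r\ge 1$: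 $\lambda_{CH}(r)=\frac{a_0}{2}\,r^{2n}\,\lambda_{CM}+\sum_{j=0}^{2n-1}r^j\epsilon_j$. -/
/-!
Expand `λ(r)` in the `λᵢ` and write `(n+1)! · C(r, i) = ((n+1)!/i!) · (r)ᵢ` with the falling
factorial `(r)ᵢ`. Then the coefficient of each `λᵢ` in `λ_CH(r) - (a₀/2) r^{2n} λ_CM` is a
polynomial in `r`, and collecting powers of `r` produces the `εⱼ`. These polynomials have degree
`< 2n`: for `i < n` the degree is `n + i`, and for `i = n, n + 1` the leading terms cancel because
`(X)ₖ₊₁ = X^{k+1} - C(k+1, 2) X^k + O(X^{k-1})`. For `i = n + 1` the cancellation of the `r^{2n}`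
terms is exactly what the choice `μ = 2a₁/a₀` achieves.
-/

open Polynomial Finset

namespace Polynomial

variable {R : Type*}

theorem C_mul_X_pow_mem_degreeLT [Semiring R] {e m : ℕ} (h : e < m) (a : R) :
    C a * X ^ e ∈ degreeLT R m :=
  mem_degreeLT.2 <| (degree_C_mul_X_pow_le e a).trans_lt (by exact_mod_cast h)

theorem C_mul_mem_degreeLT [Semiring R] {p : R[X]} {m : ℕ} (hp : p ∈ degreeLT R m) (c : R) :
    C c * p ∈ degreeLT R m := by
  rw [← smul_eq_C_mul]; exact Submodule.smul_mem _ c hp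

theorem X_pow_mul_mem_degreeLT [Semiring R] {p : R[X]} {m : ℕ} (hp : p ∈ degreeLT R m)
    (k : ℕ) : X ^ k * p ∈ degreeLT R (k + m) := by
  rw [mem_degreeLT, degree_lt_iff_coeff_zero] at hp ⊢
  intro j hj
  rw [coeff_X_pow_mul', if_pos (by omega)]
  exact hp _ (by omega)

variable [CommRing R]

theorem descPochhammer_succ_sub_X_pow_add_mem_degreeLT (k : ℕ) :
    descPochhammer R (k + 1) - X ^ (k + 1) + C ((k + 1).choose 2 : R) * X ^ k
      ∈ degreeLT R k := by
  induction k with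
  | zero => simp
  | succ k ih =>
    set g := descPochhammer R (k + 1) - X ^ (k + 1) + C ((k + 1).choose 2 : R) * X ^ k with hg
    have hc : ((k + 2).choose 2 : R) = (k + 1).choose 2 + (k + 1 : ℕ) := by
      rw [Nat.choose_succ_succ', Nat.choose_one_right, Nat.cast_add, add_comm]
    have : descPochhammer R (k + 2) - X ^ (k + 2) + C ((k + 2).choose 2 : R) * X ^ (k + 1)
        = C ((k + 1).choose 2 * (k + 1 : ℕ) : R) * X ^ k + X ^ 1 * g
          - C ((k + 1 : ℕ) : R) * g := by
      rw [descPochhammer_succ_right, hc, hg, ← C_eq_natCast]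
      simp only [map_add, map_mul]
      ring
    rw [this]
    refine sub_mem (add_mem (C_mul_X_pow_mem_degreeLT (Nat.lt_succ_self k) _) ?_) ?_
    · simpa [add_comm] using X_pow_mul_mem_degreeLT ih 1
    · exact C_mul_mem_degreeLT (degreeLT_mono (Nat.le_succ k) ih) _

theorem descPochhammer_sub_X_pow_mem_degreeLT (k : ℕ) :
    descPochhammer R k - X ^ k ∈ degreeLT R k := by
  cases k with
  | zero => simp
  | succ j =>
    rw [← add_sub_cancel_right (descPochhammer R (j + 1) - X ^ (j + 1))
      (C ((j + 1).choose 2 : R) * X ^ j)]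
    exact sub_mem (degreeLT_mono j.le_succ (descPochhammer_succ_sub_X_pow_add_mem_degreeLT j))
      (C_mul_X_pow_mem_degreeLT j.lt_succ_self _)

theorem descPochhammer_mem_degreeLT (k : ℕ) : descPochhammer R k ∈ degreeLT R (k + 1) := by
  rw [← sub_add_cancel (descPochhammer R k) (X ^ k)]
  refine add_mem (degreeLT_mono k.le_succ (descPochhammer_sub_X_pow_mem_degreeLT k)) ?_
  simpa using C_mul_X_pow_mem_degreeLT (R := R) k.lt_succ_self 1

end Polynomial

section Collect

variable {R V : Type*} [CommRing R] [AddCommGroup V] [Module R V]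

theorem eval_smul_eq_sum_pow_smul {m : ℕ} {q : R[X]} (hq : q ∈ degreeLT R m) (x : R) (v : V) :
    q.eval x • v = ∑ j ∈ range m, x ^ j • q.coeff j • v := by
  rw [eval_eq_sum_degreeLTEquiv hq, sum_smul,
    ← Fin.sum_univ_eq_sum_range (fun j => x ^ j • q.coeff j • v)]
  simp [degreeLTEquiv, smul_smul, mul_comm]

theorem exists_sum_eval_smul_eq_sum_pow_smul {ι : Type*} (s : Finset ι) {m : ℕ} {c : ι → R[X]}
    (hc : ∀ i ∈ s, c i ∈ degreeLT R m) (v : ι → V) :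
    ∃ ε : ℕ → V, ∀ x : R, ∑ i ∈ s, (c i).eval x • v i = ∑ j ∈ range m, x ^ j • ε j := by
  refine ⟨fun j => ∑ i ∈ s, (c i).coeff j • v i, fun x => ?_⟩
  rw [sum_congr rfl fun i hi => eval_smul_eq_sum_pow_smul (hc i hi) x (v i), sum_comm]
  simp only [smul_sum]

end Collect

section RemainderCoeff

variable {K : Type*} [Field K]

/-- The coefficient of `λ i` in `λ_CH(r) - (a₀/2) r^{2n} λ_CM`, as a polynomial in `r`
(see `sum_remainderCoeff_eval_smul`). -/
noncomputable def remainderCoeff (a : ℕ → K) (μ : K) (n i : ℕ) : K[X] :=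
  if i = n + 1 then
    (∑ j ∈ range (n + 1), C (a j) * X ^ (n - j)) * X ^ (n + 1)
      - C (a 0) * X ^ n * descPochhammer K (n + 1) - C (a 0 / 2 * (μ + n * (n + 1))) * X ^ (2 * n)
  else if i = n then
    C (-(a 0 * (n + 1))) * (X ^ n * (descPochhammer K n - X ^ n))
  else
    C (-(a 0 * (n + 1).factorial / i.factorial)) * (X ^ n * descPochhammer K i)

variable [CharZero K]

theorem remainderCoeff_succ_mem_degreeLT {n : ℕ} (hn : 1 ≤ n) {a : ℕ → K} (ha0 : a 0 ≠ 0)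
    {μ : K} (hμ : μ = 2 * a 1 / a 0) : remainderCoeff a μ n (n + 1) ∈ degreeLT K (2 * n) := by
  rw [remainderCoeff, if_pos rfl]
  obtain ⟨m, rfl⟩ : ∃ m, n = m + 1 := ⟨n - 1, by omega⟩
  set tail := ∑ i ∈ range m, C (a (i + 2)) * X ^ (m - 1 - i)
  have hsplit : ∑ i ∈ range (m + 1 + 1), C (a i) * X ^ (m + 1 - i)
      = tail + C (a 1) * X ^ m + C (a 0) * X ^ (m + 1) := by
    rw [sum_range_succ', sum_range_succ']
    congr 2
    exact sum_congr rfl fun i hi => by congr 2; omega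
  -- `μ` is normalised so that the `X ^ (2 * n)` terms cancel
  have hμ' : a 0 / 2 * (μ + ((m + 1 : ℕ) : K) * ((m + 1 : ℕ) + 1))
      = a 1 + a 0 * ((m + 2).choose 2 : ℕ) := by
    rw [Nat.cast_choose_two, hμ]; push_cast; field_simp; ring
  have hD := descPochhammer_succ_sub_X_pow_add_mem_degreeLT (R := K) (m + 1)
  set g := descPochhammer K (m + 1 + 1) - X ^ (m + 1 + 1)
    + C ((m + 1 + 1).choose 2 : K) * X ^ (m + 1) with hg
  have : (∑ i ∈ range (m + 1 + 1), C (a i) * X ^ (m + 1 - i)) * X ^ (m + 1 + 1)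
      - C (a 0) * X ^ (m + 1) * descPochhammer K (m + 1 + 1)
      - C (a 0 / 2 * (μ + ((m + 1 : ℕ) : K) * ((m + 1 : ℕ) + 1))) * X ^ (2 * (m + 1))
      = X ^ (m + 2) * tail - X ^ (m + 1) * (C (a 0) * g) := by
    rw [hsplit, hμ', hg]
    simp only [map_add, map_mul, map_natCast]
    ring
  rw [this, show 2 * (m + 1) = m + 2 + m by ring]
  refine sub_mem (X_pow_mul_mem_degreeLT (sum_mem fun i hi => C_mul_X_pow_mem_degreeLT ?_ _) _) ?_
  · have := mem_range.1 hi; omega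
  · exact degreeLT_mono (by omega) (X_pow_mul_mem_degreeLT (C_mul_mem_degreeLT hD _) _)

theorem remainderCoeff_mem_degreeLT {n : ℕ} (hn : 1 ≤ n) {a : ℕ → K} (ha0 : a 0 ≠ 0)
    {μ : K} (hμ : μ = 2 * a 1 / a 0) {i : ℕ} (hi : i < n + 2) :
    remainderCoeff a μ n i ∈ degreeLT K (2 * n) := by
  obtain rfl | rfl | hin : i = n + 1 ∨ i = n ∨ i < n := by omega
  · exact remainderCoeff_succ_mem_degreeLT hn ha0 hμ
  · rw [remainderCoeff, if_neg (by omega), if_pos rfl, two_mul]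
    exact C_mul_mem_degreeLT (X_pow_mul_mem_degreeLT (descPochhammer_sub_X_pow_mem_degreeLT _) _) _
  · rw [remainderCoeff, if_neg (by omega), if_neg (by omega)]
    exact C_mul_mem_degreeLT
      (degreeLT_mono (by omega) (X_pow_mul_mem_degreeLT (descPochhammer_mem_degreeLT i) n)) _

theorem sum_remainderCoeff_eval_smul {V : Type*} [AddCommGroup V] [Module K V]
    (a : ℕ → K) (μ : K) (lam : ℕ → V) (n r : ℕ) :
    ∑ i ∈ range (n + 2), (remainderCoeff a μ n i).eval (r : K) • lam i
      = ((∑ i ∈ range (n + 1), a i * (r : K) ^ (n - i)) * (r : K) ^ (n + 1)) • lam (n + 1)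
        - (a 0 * (n + 1).factorial * (r : K) ^ n) • ∑ i ∈ range (n + 2), (r.choose i : K) • lam i
        - (a 0 / 2 * (r : K) ^ (2 * n))
          • ((μ + n * (n + 1)) • lam (n + 1) - (2 * (n + 1) : K) • lam n) := by
  have hlow : ∀ i ∈ range n, (remainderCoeff a μ n i).eval (r : K) • lam i
      = -((a 0 * (n + 1).factorial * (r : K) ^ n) • (r.choose i : K) • lam i) := by
    intro i hi
    have := mem_range.1 hi
    rw [remainderCoeff, if_neg (by omega), if_neg (by omega), ← neg_smul, smul_smul]
    congr 1
    simp only [eval_mul, eval_C, eval_pow, eval_X, descPochhammer_eval_eq_descFactorial,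
      Nat.descFactorial_eq_factorial_mul_choose]
    have : (i.factorial : K) ≠ 0 := Nat.cast_ne_zero.2 i.factorial_ne_zero
    push_cast
    field_simp
  conv_lhs => rw [sum_range_succ, sum_range_succ, sum_congr rfl hlow, sum_neg_distrib, ← smul_sum]
  rw [sum_range_succ (fun i => (r.choose i : K) • lam i),
    sum_range_succ (fun i => (r.choose i : K) • lam i), remainderCoeff, if_neg (by omega),
    if_pos rfl, remainderCoeff, if_pos rfl]
  simp only [eval_mul, eval_C, eval_pow, eval_X, eval_sub, eval_finsetSum,
    descPochhammer_eval_eq_descFactorial, Nat.descFactorial_eq_factorial_mul_choose,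
    Nat.factorial_succ]
  push_cast
  module

end RemainderCoeff

/-- Second step in the proof of Proposition 3.3 of Fine–Ross:
`λ_CH(X, L^r) = λ_CM^{(a₀/2) r^{2n}} ⊗ (terms of order r^{2n-1})`. -/
theorem ch_of_power_expansion
    (V : Type*) [AddCommGroup V] [Module ℚ V]
    (n : ℕ) (hn : 1 ≤ n)
    (lam : ℕ → V)
    (Lam : ℕ → V)
    (hLam : ∀ k : ℕ, Lam k = ∑ i ∈ Finset.range (n + 2), ((k.choose i : ℚ)) • lam i)
    (a : ℕ → ℚ) (ha0 : 0 < a 0)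
    (p : ℕ → ℚ)
    (hp : ∀ k : ℕ, p k = ∑ i ∈ Finset.range (n + 1), a i * (k : ℚ) ^ (n - i))
    (μ : ℚ) (hμ : μ = 2 * a 1 / a 0)
    (lamCM : V)
    (hCM : lamCM = (μ + n * (n + 1)) • lam (n + 1) - ((2 * (n + 1) : ℚ)) • lam n)
    (lamCH : ℕ → V)
    (hCH : ∀ r : ℕ, lamCH r
      = (p r * (r : ℚ) ^ (n + 1)) • lam (n + 1)
        - (a 0 * (n + 1).factorial * (r : ℚ) ^ n) • Lam r) :
    ∃ ε : ℕ → V, ∀ r : ℕ, 1 ≤ r →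
      lamCH r = (a 0 / 2 * (r : ℚ) ^ (2 * n)) • lamCM
        + ∑ j ∈ Finset.range (2 * n), ((r : ℚ) ^ j) • ε j := by
  obtain ⟨ε, hε⟩ := exists_sum_eval_smul_eq_sum_pow_smul (range (n + 2))
    (fun i hi => remainderCoeff_mem_degreeLT hn ha0.ne' hμ (mem_range.1 hi)) lam
  refine ⟨ε, fun r _ => ?_⟩
  rw [← hε, sum_remainderCoeff_eval_smul, hCH, hLam, hCM, hp]
  abel
end

section
/- Let $V$ be a vector space over $\mathbb{Q}$, $n\ge 1$, and let $\lambda_0,\dots,\lambda_{n+1}\in V$ with $\lambda(k)=\sum_{i=0}^{n+1}\binom{k}{i}\lambda_i$, let $\mu\in\mathbb{Q}$, and $\lambda_{CM}=(\mu+n(n+1))\lambda_{n+1}-2(n+1)\lambda_n$. Fix an integer $r\ge 1$ and suppose $\lambda^{(r)}_0,\dots,\lambda^{(r)}_{n+1}\in V$ satisfy $\sum_{i=0}^{n+1}\binom{k}{i}\lambda^{(r)}_i=\lambda(rk)$ for all integers $k\ge 0$. Then $\big(\tfrac{\mu}{r}+n(n+1)\big)\lambda^{(r)}_{n+1}-2(n+1)\lambda^{(r)}_n=r^n\,\lambda_{CM}$.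 -/
open Polynomial Finset

private lemma cm_coeff_zero_pow (q : ℚ[X]) (j : ℕ) : (q ^ j).coeff 0 = (q.coeff 0) ^ j := by
  induction j with
  | zero => simp
  | succ j ih => rw [pow_succ, pow_succ, mul_coeff_zero, ih]

private lemma cm_coeff_one_pow (q : ℚ[X]) (j : ℕ) :
    (q ^ (j + 1)).coeff 1 = (j + 1 : ℚ) * (q.coeff 0) ^ j * q.coeff 1 := by
  induction j with
  | zero => simp
  | succ j ih =>
    rw [pow_succ, coeff_mul, Finset.Nat.sum_antidiagonal_eq_sum_range_succ_mk]
    simp only [Finset.sum_range_succ, Finset.sum_range_zero]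
    rw [ih, cm_coeff_zero_pow]
    push_cast
    ring_nf

/-- coefficient of `((X+1)^r - 1)^j` equals the alternating binomial sum. -/
private lemma cm_key (r j i : ℕ) :
    ((((X + 1 : ℚ[X]) ^ r) - 1) ^ j).coeff i
      = ∑ s ∈ range (j + 1), (-1 : ℚ) ^ (s + j) * (j.choose s) * ((r * s).choose i) := by
  rw [sub_pow, finset_sum_coeff]
  refine Finset.sum_congr rfl fun s hs => ?_
  have h1 : ((X + 1 : ℚ[X]) ^ (r * s)).coeff i = ((r*s).choose i : ℚ) := by
    have := coeff_X_add_C_pow (1 : ℚ) (r * s) i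
    simpa using this
  rw [one_pow, mul_one, ← pow_mul]
  rw [show ((-1:ℚ[X])^(s+j) * (X+1)^(r*s) * (j.choose s : ℚ[X]))
      = ((-1:ℚ)^(s+j) * (j.choose s : ℚ)) • ((X+1 : ℚ[X])^(r*s)) by
    rw [smul_eq_C_mul, C_mul, C_pow, C_neg, C_1, Polynomial.C_eq_natCast]
    ring]
  rw [coeff_smul, h1, smul_eq_mul]
  try ring

/-- there is `q` with `(X+1)^r - 1 = X * q` and `q.coeff t = r.choose (t+1)`. -/
private lemma cm_exists_q (r : ℕ) :
    ∃ q : ℚ[X], ((X + 1 : ℚ[X]) ^ r - 1) = X * q ∧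
      ∀ t, q.coeff t = (r.choose (t + 1) : ℚ) := by
  have h0 : ((X + 1 : ℚ[X]) ^ r - 1).coeff 0 = 0 := by
    have h := coeff_X_add_C_pow (1 : ℚ) r 0
    rw [C_1] at h
    rw [coeff_sub, h]
    simp
  obtain ⟨q, hq⟩ := Polynomial.X_dvd_iff.mpr h0
  refine ⟨q, hq, fun t => ?_⟩
  have : ((X + 1 : ℚ[X]) ^ r - 1).coeff (t + 1) = (r.choose (t + 1) : ℚ) := by
    have h := coeff_X_add_C_pow (1 : ℚ) r (t + 1)
    rw [C_1] at h
    rw [coeff_sub, h, coeff_one]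
    simp
  rw [hq] at this
  rwa [coeff_X_mul] at this

/-- coefficients of `((X+1)^r - 1)^j`. -/
private lemma cm_coeff_pow (r j i : ℕ) :
    ((((X + 1 : ℚ[X]) ^ r) - 1) ^ j).coeff i
      = if j ≤ i then
          (if i = j then ((r : ℚ)) ^ j
           else if i = j + 1 then (j : ℚ) * (r : ℚ) ^ (j - 1) * (r.choose 2) * (if j = 0 then 0 else 1)
           else ((((X + 1 : ℚ[X]) ^ r) - 1) ^ j).coeff i)
        else 0 := by
  obtain ⟨q, hq, hqc⟩ := cm_exists_q r
  have hq0 : q.coeff 0 = (r : ℚ) := by simpa using hqc 0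
  have hq1 : q.coeff 1 = (r.choose 2 : ℚ) := by simpa using hqc 1
  rw [hq, mul_pow, coeff_X_pow_mul']
  split_ifs with hle hij hij1 hj0
  · subst hij
    rw [Nat.sub_self, cm_coeff_zero_pow, hq0]
  · -- i = j + 1, j = 0
    subst hij1; subst hj0
    simp [coeff_one]
  · -- i = j + 1, j ≠ 0
    obtain ⟨m, rfl⟩ := Nat.exists_eq_succ_of_ne_zero hj0
    subst hij1
    rw [show m + 1 + 1 - (m + 1) = 1 by omega, cm_coeff_one_pow, hq0, hq1]
    push_cast
    ring
  · rfl
  · rfl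

private lemma cm_swap {V : Type*} [AddCommGroup V] [Module ℚ V]
    (N M : ℕ) (c : ℕ → ℚ) (d : ℕ → ℕ → ℚ) (v : ℕ → V) :
    ∑ s ∈ range M, c s • (∑ i ∈ range N, d s i • v i)
      = ∑ i ∈ range N, (∑ s ∈ range M, c s * d s i) • v i := by
  simp_rw [smul_sum, smul_smul]
  rw [Finset.sum_comm]
  simp_rw [Finset.sum_smul]


/-- Homogeneity of the CM line (Remark in Section 2 of Fine–Ross):
`λ_CM(X, L^r) = r^n · λ_CM(X, L)`. -/
theorem cm_homogeneous
    (V : Type*) [AddCommGroup V] [Module ℚ V]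
    (n : ℕ) (hn : 1 ≤ n)
    (lam : ℕ → V)
    (Lam : ℕ → V)
    (hLam : ∀ k : ℕ, Lam k = ∑ i ∈ Finset.range (n + 2), ((k.choose i : ℚ)) • lam i)
    (μ : ℚ)
    (lamCM : V)
    (hCM : lamCM = (μ + n * (n + 1)) • lam (n + 1) - ((2 * (n + 1) : ℚ)) • lam n)
    (r : ℕ) (hr : 1 ≤ r)
    (lam' : ℕ → V)
    (hlam' : ∀ k : ℕ,
      ∑ i ∈ Finset.range (n + 2), ((k.choose i : ℚ)) • lam' i = Lam (r * k)) :
    (μ / r + n * (n + 1)) • lam' (n + 1) - ((2 * (n + 1) : ℚ)) • lam' n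
      = ((r : ℚ) ^ n) • lamCM := by
  -- main formula: lam' j = ∑ i, coeff ((X+1)^r - 1)^j i • lam i for j < n + 2
  have main : ∀ j, j < n + 2 →
      lam' j = ∑ i ∈ range (n + 2), (((((X + 1 : ℚ[X]) ^ r) - 1) ^ j).coeff i) • lam i := by
    intro j hj
    have hA : ∑ s ∈ range (j + 1), ((-1 : ℚ) ^ (s + j) * (j.choose s)) • Lam (r * s)
        = lam' j := by
      have : ∀ s, Lam (r * s) = ∑ i ∈ range (n + 2), ((s.choose i : ℚ)) • lam' i :=
        fun s => (hlam' s).symm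
      simp_rw [this]
      rw [cm_swap]
      have hco : ∀ i, (∑ s ∈ range (j + 1),
          ((-1 : ℚ) ^ (s + j) * (j.choose s)) * (s.choose i))
          = if i = j then (1 : ℚ) else 0 := by
        intro i
        have h := cm_key 1 j i
        simp only [pow_one, one_mul] at h
        rw [← h, show (X + 1 - 1 : ℚ[X]) = X from by ring, coeff_X_pow]
      simp_rw [hco]
      rw [Finset.sum_eq_single j]
      · rw [if_pos rfl, one_smul]
      · intro b _ hb
        rw [if_neg hb, zero_smul]
      · intro h
        exact absurd (mem_range.mpr hj) h
    have hB : ∑ s ∈ range (j + 1), ((-1 : ℚ) ^ (s + j) * (j.choose s)) • Lam (r * s)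
        = ∑ i ∈ range (n + 2), (((((X + 1 : ℚ[X]) ^ r) - 1) ^ j).coeff i) • lam i := by
      simp_rw [hLam]
      rw [cm_swap]
      refine Finset.sum_congr rfl fun i _ => ?_
      rw [cm_key r j i]
    rw [← hA, hB]
  obtain ⟨m, rfl⟩ : ∃ m, n = m + 1 := ⟨n - 1, by omega⟩
  have hr0 : (r : ℚ) ≠ 0 := by positivity
  -- compute lam' (n+1)
  have e1 : lam' (m + 2) = ((r : ℚ) ^ (m + 2)) • lam (m + 2) := by
    rw [main (m + 2) (by omega), Finset.sum_range_succ]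
    rw [Finset.sum_eq_zero, zero_add, cm_coeff_pow]
    · simp
    · intro i hi
      rw [cm_coeff_pow, if_neg (by rw [mem_range] at hi; omega), zero_smul]
  have e2 : lam' (m + 1) = ((r : ℚ) ^ (m + 1)) • lam (m + 1)
      + (((m : ℚ) + 1) * (r : ℚ) ^ m * (r * (r - 1) / 2)) • lam (m + 2) := by
    rw [main (m + 1) (by omega), Finset.sum_range_succ, Finset.sum_range_succ]
    rw [Finset.sum_eq_zero, zero_add]
    · congr 1
      · rw [cm_coeff_pow]
        simp
      · rw [cm_coeff_pow, if_pos (by omega), if_neg (by omega), if_pos rfl,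
          if_neg (by omega)]
        rw [Nat.cast_choose_two]
        push_cast
        ring_nf
    · intro i hi
      rw [cm_coeff_pow, if_neg (by rw [mem_range] at hi; omega), zero_smul]
  show (μ / r + (m+1 : ℕ) * ((m+1 : ℕ) + 1)) • lam' ((m+1) + 1)
      - ((2 * ((m+1 : ℕ) + 1) : ℚ)) • lam' (m+1) = ((r : ℚ) ^ (m+1)) • lamCM
  rw [hCM]
  rw [show (m + 1) + 1 = m + 2 from rfl, e1, e2]
  match_scalars
  · field_simp
    ring
  · ring
end

section
/- Let $V$ be a vector space over $\mathbb{Q}$, $n\ge 1$, and let $\lambda_0,\dots,\lambda_{n+1}\in V$ with $\lambda(k)=\sum_{i=0}^{n+1}\binom{k}{i}\lambda_i$, let $p(k)=a_0k^n+a_1k^{n-1}+\cdots+a_n$ with $a_i\in\mathbb{Q}$, $a_0>0$, and $\mu=2a_1/a_0$. Let $\sigma\in V$ and suppose $\lambda'_0,\dots,\lambda'_{n+1}\in V$ satisfy $\sum_{i=0}^{n+1}\binom{k}{i}\lambda'_i=\lambda(k)+k\,p(k)\,\sigma$ for all integers $k\ge 0$. Then $(\mu+n(n+1))\lambda'_{n+1}-2(n+1)\lambda'_n=(\mu+n(n+1))\lambda_{n+1}-2(n+1)\lambda_n$.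 -/
/-!
Twisting by `σ` changes the binomial coefficients `λ_i` by those of `k ↦ k p(k) σ`, and the
coefficients of a function `f` in the basis `k ↦ (k choose i)` are its forward differences
`Δⁱ f (0)`. Only the top two matter: `Δⁿ⁺¹(k p)(0) = (n+1)! a₀` and, since
`Δⁿ kⁿ⁺¹ (0) = n! (n+1 choose 2)`, `Δⁿ(k p)(0) = n! ((n+1 choose 2) a₀ + a₁)`. With `μ = 2a₁/a₀`
these cancel in the CM combination.
-/

open Finset Nat fwdDiff

section

variable {M G : Type*} [AddCommMonoid M] [AddCommGroup G]

theorem fwdDiff_iter_smul_const {R : Type*} [Ring R] [Module R G] (h : M) (f : M → R) (g : G)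
    (n : ℕ) : Δ_[h] ^[n] (fun y ↦ f y • g) = fun y ↦ Δ_[h] ^[n] f y • g := by
  induction n with
  | zero => rfl
  | succ n ih => simp only [Function.iterate_succ_apply', ih, fwdDiff_smul_const]; rfl

theorem fwdDiff_iter_sum_choose_nsmul_apply_zero (c : ℕ → G) {N j : ℕ} (hj : j < N) :
    Δ_[1] ^[j] (fun k : ℕ ↦ ∑ i ∈ range N, k.choose i • c i) 0 = c j := by
  have hsum : (fun k : ℕ ↦ ∑ i ∈ range N, k.choose i • c i)
      = ∑ i ∈ range N, fun k : ℕ ↦ ((k.choose i : ℕ) : ℤ) • c i := by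
    ext k; simp only [Finset.sum_apply, natCast_zsmul]
  rw [hsum, fwdDiff_iter_finsetSum, Finset.sum_apply]
  simp only [fwdDiff_iter_smul_const, fwdDiff_iter_choose_zero, ite_smul, one_smul, zero_smul,
    sum_ite_eq, mem_range, hj, if_true]

theorem fwdDiff_iter_comp_natCast {R : Type*} [AddCommMonoidWithOne R] (g : R → G) (j y : ℕ) :
    Δ_[1] ^[j] (fun k : ℕ ↦ g k) y = Δ_[1] ^[j] g y := by
  simp [fwdDiff_iter_eq_sum_shift]

theorem eq_fwdDiff_iter_smul_of_sum_choose_nsmul {R : Type*} [CommRing R] [Module R G]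
    {c : ℕ → G} {N j : ℕ} (g : R → R) (v : G)
    (h : ∀ k : ℕ, ∑ i ∈ range N, k.choose i • c i = g k • v) (hj : j < N) :
    c j = Δ_[1] ^[j] g 0 • v := by
  rw [← fwdDiff_iter_sum_choose_nsmul_apply_zero c hj, funext h, fwdDiff_iter_smul_const]
  simp only [fwdDiff_iter_comp_natCast g, Nat.cast_zero]

end

section

variable {R : Type*} [CommRing R]

theorem fwdDiff_iter_sum_mul {ι : Type*} (s : Finset ι) (c : ι → R) (f : ι → R → R) (j : ℕ)
    (y : R) :
    Δ_[1] ^[j] (fun r ↦ ∑ i ∈ s, c i * f i r) y = ∑ i ∈ s, c i * Δ_[1] ^[j] (f i) y := by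
  simp only [fwdDiff_iter_eq_sum_shift, Finset.mul_sum, zsmul_eq_mul]
  rw [Finset.sum_comm]
  exact Finset.sum_congr rfl fun i _ ↦ Finset.sum_congr rfl fun k _ ↦ by ring

theorem fwdDiff_iter_pow_succ_apply_zero (n : ℕ) :
    Δ_[1] ^[n] (fun r : R ↦ r ^ (n + 1)) 0 = n ! * (n + 1).choose 2 := by
  induction n with
  | zero => simp
  | succ n ih =>
    have hpow : (Δ_[1] fun r : R ↦ r ^ (n + 2)) =
        fun r ↦ ∑ i ∈ range (n + 2), ((n + 2).choose i : R) * r ^ i := by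
      ext x
      simp [fwdDiff, add_pow, sum_range_succ, mul_comm]
    rw [Function.iterate_succ_apply, hpow, fwdDiff_iter_sum_mul, sum_range_succ, sum_range_succ,
      sum_eq_zero fun i hi ↦ by
        rw [fwdDiff_iter_pow_eq_zero_of_lt (by have := mem_range.1 hi; lia), Pi.zero_apply,
          mul_zero],
      ih, fwdDiff_iter_eq_factorial]
    have hchoose : ((n + 1).choose 2 * (n + 1 + 1) : R) = (n + 1 + 1).choose 2 * n := by
      simpa using congrArg (Nat.cast : ℕ → R) (choose_mul_succ_eq (n + 1) 2)
    rw [choose_symm_add (a := n) (b := 2), choose_succ_self_right, factorial_succ]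
    simp only [Pi.natCast_apply, zero_add]
    push_cast
    linear_combination (n ! : R) * hchoose

theorem mul_sum_pow_eq_sum_pow (a : ℕ → R) (n : ℕ) (r : R) :
    r * ∑ i ∈ range (n + 1), a i * r ^ (n - i) = ∑ i ∈ range (n + 1), a i * r ^ (n - i + 1) := by
  rw [Finset.mul_sum]
  exact Finset.sum_congr rfl fun i _ ↦ by ring

theorem fwdDiff_iter_mul_sum_pow_apply_zero (a : ℕ → R) (n : ℕ) :
    Δ_[1] ^[n + 1] (fun r ↦ r * ∑ i ∈ range (n + 1), a i * r ^ (n - i)) 0 = (n + 1)! * a 0 := by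
  simp only [mul_sum_pow_eq_sum_pow, fwdDiff_iter_sum_mul]
  rw [sum_range_succ', sum_eq_zero fun i hi ↦ by
      rw [fwdDiff_iter_pow_eq_zero_of_lt (by have := mem_range.1 hi; lia), Pi.zero_apply,
        mul_zero],
    Nat.sub_zero, fwdDiff_iter_eq_factorial, zero_add, Pi.natCast_apply, mul_comm]

theorem fwdDiff_iter_pred_mul_sum_pow_apply_zero (a : ℕ → R) {n : ℕ} (hn : 1 ≤ n) :
    Δ_[1] ^[n] (fun r ↦ r * ∑ i ∈ range (n + 1), a i * r ^ (n - i)) 0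
      = n ! * ((n + 1).choose 2 * a 0 + a 1) := by
  obtain ⟨m, rfl⟩ := Nat.exists_eq_add_of_le' hn
  simp only [mul_sum_pow_eq_sum_pow, fwdDiff_iter_sum_mul]
  rw [sum_range_succ', sum_range_succ', sum_eq_zero fun i hi ↦ by
      rw [fwdDiff_iter_pow_eq_zero_of_lt (by have := mem_range.1 hi; lia), Pi.zero_apply,
        mul_zero],
    Nat.sub_zero, fwdDiff_iter_pow_succ_apply_zero, zero_add, Nat.add_sub_cancel,
    fwdDiff_iter_eq_factorial, Pi.natCast_apply]
  ring

end

/-- Rigidity of the CM line (Corollary 4.5 of Fine–Ross):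
`λ_CM(X, L ⊗ π*σ) = λ_CM(X, L)`. -/
theorem cm_rigid
    (V : Type*) [AddCommGroup V] [Module ℚ V]
    (n : ℕ) (hn : 1 ≤ n)
    (lam : ℕ → V)
    (Lam : ℕ → V)
    (hLam : ∀ k : ℕ, Lam k = ∑ i ∈ Finset.range (n + 2), ((k.choose i : ℚ)) • lam i)
    (a : ℕ → ℚ) (ha0 : 0 < a 0)
    (p : ℕ → ℚ)
    (hp : ∀ k : ℕ, p k = ∑ i ∈ Finset.range (n + 1), a i * (k : ℚ) ^ (n - i))
    (μ : ℚ) (hμ : μ = 2 * a 1 / a 0)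
    (σ : V)
    (lam' : ℕ → V)
    (hlam' : ∀ k : ℕ,
      ∑ i ∈ Finset.range (n + 2), ((k.choose i : ℚ)) • lam' i
        = Lam k + ((k : ℚ) * p k) • σ) :
    (μ + n * (n + 1)) • lam' (n + 1) - ((2 * (n + 1) : ℚ)) • lam' n
      = (μ + n * (n + 1)) • lam (n + 1) - ((2 * (n + 1) : ℚ)) • lam n := by
  set q : ℚ → ℚ := fun r ↦ r * ∑ i ∈ range (n + 1), a i * r ^ (n - i)
  have hdiff : ∀ k : ℕ, ∑ i ∈ range (n + 2), k.choose i • (lam' i - lam i) = q k • σ := by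
    intro k
    simp only [smul_sub, sum_sub_distrib, ← Nat.cast_smul_eq_nsmul ℚ, hlam', hLam, hp, q]
    abel
  have htop := eq_fwdDiff_iter_smul_of_sum_choose_nsmul q σ hdiff (lt_add_one (n + 1))
  have hsub := eq_fwdDiff_iter_smul_of_sum_choose_nsmul q σ hdiff (by lia : n < n + 2)
  rw [fwdDiff_iter_mul_sum_pow_apply_zero] at htop
  rw [fwdDiff_iter_pred_mul_sum_pow_apply_zero a hn] at hsub
  rw [← sub_eq_zero, sub_sub_sub_comm, ← smul_sub, ← smul_sub, htop, hsub, smul_smul, smul_smul,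
    ← sub_smul, hμ, cast_choose_two, factorial_succ]
  convert zero_smul ℚ σ
  field_simp
  push_cast
  ring
end

section
/- Let $V$ be a vector space over $\mathbb{Q}$. For $i=1,2$ let $n_i\ge 1$ be integers, let $p_i(k)=a_0^{(i)}k^{n_i}+a_1^{(i)}k^{n_i-1}+\cdots$ be polynomials of degree $n_i$ with rational coefficients and $a_0^{(i)}>0$, let $\lambda^{(i)}_0,\dots,\lambda^{(i)}_{n_i+1}\in V$, set $\lambda^{(i)}(k)=\sum_{j=0}^{n_i+1}\binom{k}{j}\lambda^{(i)}_j$ and $\mu_i=2a_1^{(i)}/a_0^{(i)}$. Set $n=n_1+n_2$, let $a_0=a_0^{(1)}a_0^{(2)}$ and $a_1=a_0^{(1)}a_1^{(2)}+a_1^{(1)}a_0^{(2)}$ be the top two coefficients of $p_1p_2$, and $\mu=2a_1/a_0$. Suppose $\lambda_0,\dots,\lambda_{n+1}\in V$ satisfy $\sum_{j=0}^{n+1}\binom{k}{j}\lambda_j=p_2(k)\,\lambda^{(1)}(k)+p_1(k)\,\lambda^{(2)}(k)$ for all integers $k\ge 0$. Then $\frac{1}{2a_0(n+1)!}\big[(\mu+n(n+1))\lambda_{n+1}-2(n+1)\lambda_n\big]=\sum_{i=1}^{2}\frac{1}{2a_0^{(i)}(n_i+1)!}\big[(\mu_i+n_i(n_i+1))\lambda^{(i)}_{n_i+1}-2(n_i+1)\lambda^{(i)}_{n_i}\big]$.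 -/
/-!
Write `P(k) = ∑ⱼ C(k, j) λⱼ = e₀ kⁿ⁺¹ + e₁ kⁿ + ⋯` and `p(k) = a₀ kⁿ + a₁ kⁿ⁻¹ + ⋯`. Expanding the
binomial coefficients shows that the normalised CM class is `(a₁ e₀ - a₀ e₁) / a₀²`, minus the
constant term of the expansion of `P / p` in powers of `1 / k`. The hypothesis says
`P / (p₁ p₂) = P₁ / p₁ + P₂ / p₂`, so these constant terms add. To compare coefficients of
`V`-valued polynomial functions we apply every linear functional `V → ℚ`: a rational polynomial is
determined by its values at the natural numbers.
-/

open Finset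

namespace Polynomial

section Ring

variable (R : Type*) [Ring R]

theorem coeff_descPochhammer_self (n : ℕ) : (descPochhammer R n).coeff n = 1 := by
  have h := (monic_descPochhammer ℤ n).coeff_natDegree
  rw [descPochhammer_natDegree] at h
  rw [← descPochhammer_map (Int.castRingHom R), coeff_map, h, map_one]

theorem coeff_descPochhammer_succ_self (n : ℕ) :
    (descPochhammer R (n + 1)).coeff n = -((n + 1).choose 2 : R) := by
  induction n with
  | zero => simp
  | succ n ih =>
    rw [descPochhammer_succ_right, mul_sub, coeff_sub, coeff_mul_X, ← C_eq_natCast, coeff_mul_C,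
      ih, coeff_descPochhammer_self, one_mul, Nat.choose_succ_succ' (n + 1) 1, Nat.choose_one_right]
    push_cast
    abel

end Ring

theorem coeff_mul_add_add_one_of_natDegree_le {R : Type*} [Semiring R] {p q : R[X]} {m l : ℕ}
    (hp : p.natDegree ≤ m + 1) (hq : q.natDegree ≤ l + 1) :
    (p * q).coeff (m + l + 1) = p.coeff (m + 1) * q.coeff l + p.coeff m * q.coeff (l + 1) := by
  rw [coeff_mul, sum_eq_add_of_mem (m + 1, l) (m, l + 1)
    (HasAntidiagonal.mem_antidiagonal.mpr (by omega))
    (HasAntidiagonal.mem_antidiagonal.mpr (by omega)) (by simp)]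
  rintro ⟨i, j⟩ hij ⟨h₁, h₂⟩
  rw [HasAntidiagonal.mem_antidiagonal] at hij
  rcases lt_or_ge (m + 1) i with hi | hi
  · rw [coeff_eq_zero_of_natDegree_lt (hp.trans_lt hi), zero_mul]
  · have hj : l + 1 < j := by
      simp only [ne_eq, Prod.mk.injEq] at h₁ h₂
      omega
    rw [coeff_eq_zero_of_natDegree_lt (hq.trans_lt hj), mul_zero]

theorem coeff_mul_add_sub_one_of_natDegree_le {R : Type*} [Semiring R] {p q : R[X]} {m l : ℕ}
    (hm : 1 ≤ m) (hl : 1 ≤ l) (hp : p.natDegree ≤ m) (hq : q.natDegree ≤ l) :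
    (p * q).coeff (m + l - 1) = p.coeff m * q.coeff (l - 1) + p.coeff (m - 1) * q.coeff l := by
  obtain ⟨m, rfl⟩ := Nat.exists_eq_add_of_le' hm
  obtain ⟨l, rfl⟩ := Nat.exists_eq_add_of_le' hl
  rw [show m + 1 + (l + 1) - 1 = m + l + 1 by omega, coeff_mul_add_add_one_of_natDegree_le hp hq]
  simp only [Nat.add_sub_cancel]

end Polynomial

open Polynomial

section DescPoly

variable {R : Type*} [Semiring R]

noncomputable def descPoly (N : ℕ) (a : ℕ → R) : R[X] :=
  ∑ i ∈ range (N + 1), C (a i) * X ^ (N - i)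

theorem natDegree_descPoly_le (N : ℕ) (a : ℕ → R) : (descPoly N a).natDegree ≤ N :=
  natDegree_sum_le_of_forall_le _ _ fun _ _ => (natDegree_C_mul_X_pow_le _ _).trans (by omega)

theorem coeff_descPoly {N i : ℕ} (hi : i ≤ N) (a : ℕ → R) :
    (descPoly N a).coeff (N - i) = a i := by
  rw [descPoly, finsetSum_coeff, sum_eq_single_of_mem i (mem_range.mpr (by omega))]
  · simp
  · intro j hj hji
    rw [coeff_C_mul_X_pow, if_neg (by rw [mem_range] at hj; omega)]

theorem eval_descPoly (N : ℕ) (a : ℕ → R) (k : R) :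
    (descPoly N a).eval k = ∑ i ∈ range (N + 1), a i * k ^ (N - i) := by
  simp [descPoly, eval_finsetSum]

end DescPoly

section BinomialPoly

variable {K : Type*} [Field K]

noncomputable def binomialPoly (N : ℕ) (x : ℕ → K) : K[X] :=
  ∑ j ∈ range (N + 1), C (x j / j.factorial) * descPochhammer K j

theorem natDegree_binomialPoly_le (N : ℕ) (x : ℕ → K) : (binomialPoly N x).natDegree ≤ N := by
  refine natDegree_sum_le_of_forall_le _ _ fun j hj => (natDegree_C_mul_le _ _).trans ?_
  rw [descPochhammer_natDegree]
  exact Nat.lt_succ_iff.mp (mem_range.mp hj)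

theorem coeff_binomialPoly_self (N : ℕ) (x : ℕ → K) :
    (binomialPoly N x).coeff N = x N / N.factorial := by
  rw [binomialPoly, finsetSum_coeff, sum_range_succ, sum_eq_zero, coeff_C_mul,
    coeff_descPochhammer_self, mul_one, zero_add]
  intro j hj
  rw [coeff_C_mul, coeff_eq_zero_of_natDegree_lt, mul_zero]
  rw [descPochhammer_natDegree]
  exact mem_range.mp hj

theorem coeff_binomialPoly_succ_self (N : ℕ) (x : ℕ → K) :
    (binomialPoly (N + 1) x).coeff N =
      x N / N.factorial - (N + 1).choose 2 * (x (N + 1) / (N + 1).factorial) := by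
  rw [binomialPoly, finsetSum_coeff, sum_range_succ, sum_range_succ, sum_eq_zero, coeff_C_mul,
    coeff_C_mul, coeff_descPochhammer_self, coeff_descPochhammer_succ_self]
  · ring
  intro j hj
  rw [coeff_C_mul, coeff_eq_zero_of_natDegree_lt, mul_zero]
  rw [descPochhammer_natDegree]
  exact mem_range.mp hj

theorem eval_natCast_binomialPoly [CharZero K] (N : ℕ) (x : ℕ → K) (k : ℕ) :
    (binomialPoly N x).eval (k : K) = ∑ j ∈ range (N + 1), (k.choose j : K) * x j := by
  simp only [binomialPoly, eval_finsetSum, eval_mul, eval_C]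
  refine sum_congr rfl fun j _ => ?_
  rw [descPochhammer_eval_eq_descFactorial, Nat.descFactorial_eq_factorial_mul_choose]
  have : (j.factorial : K) ≠ 0 := Nat.cast_ne_zero.mpr j.factorial_ne_zero
  push_cast
  field_simp

end BinomialPoly

section CMClass

variable {K : Type*} [Field K]

/-- For `p` of degree `n ≥ 1` and `P` of degree at most `n + 1`, this is the constant term of the
expansion of `P / p` in powers of `X⁻¹`. -/
noncomputable def quotConstTerm (p P : K[X]) (n : ℕ) : K :=
  (p.coeff n * P.coeff n - p.coeff (n - 1) * P.coeff (n + 1)) / p.coeff n ^ 2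

def cmClass {V : Type*} [AddCommGroup V] [Module K V] (n : ℕ) (a₀ a₁ : K) (lam : ℕ → V) : V :=
  (1 / (2 * a₀ * (n + 1).factorial)) •
    ((2 * a₁ / a₀ + n * (n + 1)) • lam (n + 1) - (2 * (n + 1) : K) • lam n)

theorem LinearMap.map_cmClass {V W : Type*} [AddCommGroup V] [Module K V] [AddCommGroup W]
    [Module K W] (f : V →ₗ[K] W) (n : ℕ) (a₀ a₁ : K) (lam : ℕ → V) :
    f (cmClass n a₀ a₁ lam) = cmClass n a₀ a₁ (f ∘ lam) := by
  simp [cmClass]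

theorem cmClass_eq_neg_quotConstTerm [CharZero K] {p : K[X]} {n : ℕ} (hp : p.coeff n ≠ 0)
    (x : ℕ → K) :
    cmClass n (p.coeff n) (p.coeff (n - 1)) x = -quotConstTerm p (binomialPoly (n + 1) x) n := by
  rw [cmClass, quotConstTerm, coeff_binomialPoly_self, coeff_binomialPoly_succ_self,
    Nat.factorial_succ, Nat.cast_choose_two, smul_eq_mul, smul_eq_mul, smul_eq_mul]
  have hf : (n.factorial : K) ≠ 0 := Nat.cast_ne_zero.mpr n.factorial_ne_zero
  push_cast
  field_simp
  ring

theorem quotConstTerm_mul_add {p₁ p₂ P₁ P₂ : K[X]} {n₁ n₂ : ℕ} (hn₁ : 1 ≤ n₁) (hn₂ : 1 ≤ n₂)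
    (hp₁ : p₁.natDegree ≤ n₁) (hp₂ : p₂.natDegree ≤ n₂) (hP₁ : P₁.natDegree ≤ n₁ + 1)
    (hP₂ : P₂.natDegree ≤ n₂ + 1) (h₁ : p₁.coeff n₁ ≠ 0) (h₂ : p₂.coeff n₂ ≠ 0) :
    quotConstTerm (p₁ * p₂) (p₂ * P₁ + p₁ * P₂) (n₁ + n₂) =
      quotConstTerm p₁ P₁ n₁ + quotConstTerm p₂ P₂ n₂ := by
  have top {m l : ℕ} {p P : K[X]} (hp : p.natDegree ≤ m) (hP : P.natDegree ≤ l + 1) :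
      (p * P).coeff (l + m + 1) = p.coeff m * P.coeff (l + 1) := by
    rw [← coeff_mul_add_eq_of_natDegree_le hp hP]; congr 1; omega
  have next {m l : ℕ} (hm : 1 ≤ m) {p P : K[X]} (hp : p.natDegree ≤ m) (hP : P.natDegree ≤ l + 1) :
      (p * P).coeff (l + m) = p.coeff m * P.coeff l + p.coeff (m - 1) * P.coeff (l + 1) := by
    have := coeff_mul_add_sub_one_of_natDegree_le hm (Nat.le_add_left 1 l) hp hP
    rwa [Nat.add_sub_cancel, show m + (l + 1) - 1 = l + m by omega] at this
  simp only [quotConstTerm, coeff_add, coeff_mul_add_eq_of_natDegree_le hp₁ hp₂,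
    coeff_mul_add_sub_one_of_natDegree_le hn₁ hn₂ hp₁ hp₂, top hp₂ hP₁, next hn₂ hp₂ hP₁]
  rw [add_comm n₁ n₂, top hp₁ hP₂, next hn₁ hp₁ hP₂]
  field_simp
  ring

theorem cmClass_add_of_binomialPoly_eq [CharZero K] {p₁ p₂ : K[X]} {n₁ n₂ : ℕ} (hn₁ : 1 ≤ n₁)
    (hn₂ : 1 ≤ n₂) (hp₁ : p₁.natDegree ≤ n₁) (hp₂ : p₂.natDegree ≤ n₂) (h₁ : p₁.coeff n₁ ≠ 0)
    (h₂ : p₂.coeff n₂ ≠ 0) {x y z : ℕ → K}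
    (h : binomialPoly (n₁ + n₂ + 1) x =
      p₂ * binomialPoly (n₁ + 1) y + p₁ * binomialPoly (n₂ + 1) z) :
    cmClass (n₁ + n₂) (p₁.coeff n₁ * p₂.coeff n₂)
        (p₁.coeff n₁ * p₂.coeff (n₂ - 1) + p₁.coeff (n₁ - 1) * p₂.coeff n₂) x =
      cmClass n₁ (p₁.coeff n₁) (p₁.coeff (n₁ - 1)) y +
        cmClass n₂ (p₂.coeff n₂) (p₂.coeff (n₂ - 1)) z := by
  rw [← coeff_mul_add_eq_of_natDegree_le hp₁ hp₂,
    ← coeff_mul_add_sub_one_of_natDegree_le hn₁ hn₂ hp₁ hp₂]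
  have h₁₂ : (p₁ * p₂).coeff (n₁ + n₂) ≠ 0 := by
    rw [coeff_mul_add_eq_of_natDegree_le hp₁ hp₂]
    exact mul_ne_zero h₁ h₂
  rw [cmClass_eq_neg_quotConstTerm h₁₂, cmClass_eq_neg_quotConstTerm h₁,
    cmClass_eq_neg_quotConstTerm h₂, h, quotConstTerm_mul_add hn₁ hn₂ hp₁ hp₂
      (natDegree_binomialPoly_le _ _) (natDegree_binomialPoly_le _ _) h₁ h₂, neg_add]

theorem cmClass_add_of_forall_sum_choose_eq [CharZero K] {V : Type*} [AddCommGroup V]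
    [Module K V] {p₁ p₂ : K[X]} {n₁ n₂ : ℕ} (hn₁ : 1 ≤ n₁) (hn₂ : 1 ≤ n₂)
    (hp₁ : p₁.natDegree ≤ n₁) (hp₂ : p₂.natDegree ≤ n₂) (h₁ : p₁.coeff n₁ ≠ 0)
    (h₂ : p₂.coeff n₂ ≠ 0) {lam lam₁ lam₂ : ℕ → V}
    (h : ∀ k : ℕ, ∑ j ∈ range (n₁ + n₂ + 2), (k.choose j : K) • lam j =
      p₂.eval (k : K) • ∑ j ∈ range (n₁ + 2), (k.choose j : K) • lam₁ j +
        p₁.eval (k : K) • ∑ j ∈ range (n₂ + 2), (k.choose j : K) • lam₂ j) :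
    cmClass (n₁ + n₂) (p₁.coeff n₁ * p₂.coeff n₂)
        (p₁.coeff n₁ * p₂.coeff (n₂ - 1) + p₁.coeff (n₁ - 1) * p₂.coeff n₂) lam =
      cmClass n₁ (p₁.coeff n₁) (p₁.coeff (n₁ - 1)) lam₁ +
        cmClass n₂ (p₂.coeff n₂) (p₂.coeff (n₂ - 1)) lam₂ := by
  rw [← sub_eq_zero, ← Module.forall_dual_apply_eq_zero_iff K]
  intro φ
  rw [map_sub, map_add, φ.map_cmClass, φ.map_cmClass, φ.map_cmClass, sub_eq_zero]
  refine cmClass_add_of_binomialPoly_eq hn₁ hn₂ hp₁ hp₂ h₁ h₂ <| eq_of_infinite_eval_eq _ _ <|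
    Set.infinite_of_injective_forall_mem Nat.cast_injective fun k => ?_
  simpa [eval_natCast_binomialPoly, map_sum] using congrArg φ (h k)

end CMClass

/-- Corollary 4.7 of Fine–Ross: the normalised CM class of a fibred product with product
polarisation is the sum of the normalised CM classes of the factors. -/
theorem cm_of_product
    (V : Type*) [AddCommGroup V] [Module ℚ V]
    (n1 n2 : ℕ) (hn1 : 1 ≤ n1) (hn2 : 1 ≤ n2)
    (a b : ℕ → ℚ) (ha0 : 0 < a 0) (hb0 : 0 < b 0)
    (p1 p2 : ℕ → ℚ)
    (hp1 : ∀ k : ℕ, p1 k = ∑ i ∈ Finset.range (n1 + 1), a i * (k : ℚ) ^ (n1 - i))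
    (hp2 : ∀ k : ℕ, p2 k = ∑ i ∈ Finset.range (n2 + 1), b i * (k : ℚ) ^ (n2 - i))
    (lam1 lam2 : ℕ → V)
    (Lam1 Lam2 : ℕ → V)
    (hLam1 : ∀ k : ℕ, Lam1 k = ∑ j ∈ Finset.range (n1 + 2), ((k.choose j : ℚ)) • lam1 j)
    (hLam2 : ∀ k : ℕ, Lam2 k = ∑ j ∈ Finset.range (n2 + 2), ((k.choose j : ℚ)) • lam2 j)
    (μ1 μ2 : ℚ) (hμ1 : μ1 = 2 * a 1 / a 0) (hμ2 : μ2 = 2 * b 1 / b 0)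
    (n : ℕ) (hn : n = n1 + n2)
    (a0 a1 : ℚ) (ha0' : a0 = a 0 * b 0) (ha1' : a1 = a 0 * b 1 + a 1 * b 0)
    (μ : ℚ) (hμ : μ = 2 * a1 / a0)
    (lam : ℕ → V)
    (hlam : ∀ k : ℕ,
      ∑ j ∈ Finset.range (n + 2), ((k.choose j : ℚ)) • lam j
        = p2 k • Lam1 k + p1 k • Lam2 k) :
    (1 / (2 * a0 * (n + 1).factorial)) •
        ((μ + n * (n + 1)) • lam (n + 1) - ((2 * (n + 1) : ℚ)) • lam n)
      = (1 / (2 * a 0 * (n1 + 1).factorial)) •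
          ((μ1 + n1 * (n1 + 1)) • lam1 (n1 + 1) - ((2 * (n1 + 1) : ℚ)) • lam1 n1)
        + (1 / (2 * b 0 * (n2 + 1).factorial)) •
            ((μ2 + n2 * (n2 + 1)) • lam2 (n2 + 1) - ((2 * (n2 + 1) : ℚ)) • lam2 n2) := by
  subst hn hμ ha0' ha1' hμ1 hμ2
  have ha : (descPoly n1 a).coeff n1 = a 0 := by simpa using coeff_descPoly n1.zero_le a
  have hb : (descPoly n2 b).coeff n2 = b 0 := by simpa using coeff_descPoly n2.zero_le b
  have key := cmClass_add_of_forall_sum_choose_eq hn1 hn2 (natDegree_descPoly_le n1 a)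
    (natDegree_descPoly_le n2 b) (ha ▸ ha0.ne') (hb ▸ hb0.ne') fun k => by
      rw [hlam, hp1, hp2, hLam1, hLam2, eval_descPoly, eval_descPoly]
  rwa [ha, hb, coeff_descPoly hn1, coeff_descPoly hn2] at key
end
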